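/- Fix n ≥ 1 and let π be an admissible permutation of {0,…,2^{n(M+1)}−1}. For 1 ≤ i ≤ n define R*_{n,i} : (0,1) → ℝ by R*_{n,i}(x) = R_i(y) for x ∈ D_{n,ℓ} and any y ∈ E_{n,π(ℓ)}. Then each R*_{n,i} is well defined and n-trim, the family (R*_{n,1},…,R*_{n,n}) is mutually independent, each R*_{n,i} takes each value o_s (1 ≤ s ≤ m) with probability 2^{−(M+1)}, and R*_{n,1}(x) + ⋯ + R*_{n,n}(x) = S*_n(x) for all x ∈ (0,1). -/

import Mathlib

open MeasureTheory Set ProbabilityTheory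
open scoped ENNReal

attribute [local instance] MeasureTheory.Measure.Subtype.measureSpace
attribute [local instance] Classical.propDecidable

noncomputable section

namespace DGS

/-- The i-th binary digit (i ≥ 1) of `x ∈ (0,1)`, using the binary expansion with
infinitely many zero digits. -/
def eps (i : ℕ) (x : ℝ) : ℕ := (⌊x * 2 ^ i⌋).toNat % 2

/-- The r-th element `j_{i,r} = i(i-1)(M+1)/2 + r·i` of `J̄_i`, for `1 ≤ r ≤ M+1`. -/
def jidx (M i r : ℕ) : ℕ := i * (i - 1) * (M + 1) / 2 + r * i

/-- The q-th binary digit (1-indexed, most significant first) of `ℓ` viewed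
as a `w`-bit number: `bit_q(ℓ) = ⌊ℓ / 2^(w-q)⌋ mod 2`. -/
def bitOf (w ℓ q : ℕ) : ℕ := ℓ / 2 ^ (w - q) % 2

/-- The dyadic interval `D_{n,ℓ}` of depth `n(M+1)`. -/
def D (M n ℓ : ℕ) : Set ℝ :=
  if ℓ = 0 then Ioo 0 ((2 : ℝ) ^ (n * (M + 1)))⁻¹
  else Ico ((ℓ : ℝ) * ((2 : ℝ) ^ (n * (M + 1)))⁻¹) (((ℓ : ℝ) + 1) * ((2 : ℝ) ^ (n * (M + 1)))⁻¹)

/-- `E_{n,ℓ}`: the set of `x ∈ (0,1)` whose binary digits along `J̄^n` are prescribed by the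
ℓ-th member of the lexicographic enumeration of `{0,1}^{J̄^n}` (coordinates listed by
increasing index); the element `j_{i,r}` of `J̄^n` is its `((i-1)(M+1)+r)`-th smallest member. -/
def E (M n ℓ : ℕ) : Set ℝ :=
  { x | x ∈ Ioo (0:ℝ) 1 ∧ ∀ i ∈ Finset.Icc 1 n, ∀ r ∈ Finset.Icc 1 (M + 1),
      eps (jidx M i r) x = bitOf (n * (M + 1)) ℓ ((i - 1) * (M + 1) + r) }

/-- `S_n = R_1 + ⋯ + R_n`. -/
def S (R : ℕ → ℝ → ℝ) (n : ℕ) (x : ℝ) : ℝ := ∑ i ∈ Finset.Icc 1 n, R i x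

/-- The right-continuous quantile of `S_n`:
`S*_n(x) = inf { t : λ{y ∈ (0,1) : S_n(y) ≤ t} > x }`. -/
def Sstar (R : ℕ → ℝ → ℝ) (n : ℕ) (x : ℝ) : ℝ :=
  sInf { t : ℝ | ENNReal.ofReal x < volume { y | y ∈ Ioo (0:ℝ) 1 ∧ S R n y ≤ t } }

/-- Lebesgue measure restricted to `(0,1)`. -/
def μ01 : Measure ℝ := volume.restrict (Ioo 0 1)

/-- `Y` is n-trim: constant on each dyadic interval of depth `n(M+1)`. -/
def Trim (M n : ℕ) (Y : ℝ → ℝ) : Prop :=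
  ∀ ℓ < 2 ^ (n * (M + 1)), ∀ x ∈ D M n ℓ, ∀ y ∈ D M n ℓ, Y x = Y y

/-- `π` is an admissible permutation of `{0, …, 2^(n(M+1)) - 1}`:
`S*_n(x) = S_n(y)` whenever `x ∈ D_{n,ℓ}` and `y ∈ E_{n,π(ℓ)}`. -/
def Admissible (M : ℕ) (R : ℕ → ℝ → ℝ) (n : ℕ)
    (π : Equiv.Perm (Fin (2 ^ (n * (M + 1))))) : Prop :=
  ∀ ℓ : Fin (2 ^ (n * (M + 1))), ∀ x ∈ D M n (ℓ : ℕ), ∀ y ∈ E M n ((π ℓ : Fin _) : ℕ),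
    Sstar R n x = S R n y

/-- The standing assumptions: `O` depends bijectively on the first `M+1` binary digits,
`o` is the increasing enumeration of its `2^(M+1)` values, and `R_i(x) = O(P_i(x))`,
where `P_i(x)` has digits `ε_{j_{i,r}}(x)`. -/
structure Setup (M : ℕ) (O : ℝ → ℝ) (o : Fin (2 ^ (M + 1)) → ℝ) (R : ℕ → ℝ → ℝ) : Prop where
  O_dep : ∀ x ∈ Ioo (0:ℝ) 1, ∀ y ∈ Ioo (0:ℝ) 1,
    (∀ r ∈ Finset.Icc 1 (M + 1), eps r x = eps r y) → O x = O y
  O_inj : ∀ x ∈ Ioo (0:ℝ) 1, ∀ y ∈ Ioo (0:ℝ) 1,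
    O x = O y → ∀ r ∈ Finset.Icc 1 (M + 1), eps r x = eps r y
  o_mono : StrictMono o
  o_range : Set.range o = O '' Ioo (0:ℝ) 1
  R_def : ∀ i, 1 ≤ i → ∀ x ∈ Ioo (0:ℝ) 1, ∀ y ∈ Ioo (0:ℝ) 1,
    (∀ r ∈ Finset.Icc 1 (M + 1), eps r y = eps (jidx M i r) x) → R i x = O y

/-- The sample space `Ω = (0,1)` (with the subspace Lebesgue measure). -/
abbrev Ω : Type := ↥(Set.Ioo (0:ℝ) 1)

/-- A "good" n-tuple of random variables on `(0,1)`: mutually independent, each n-trim,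
each taking each value `o_s` with probability `2^{-(M+1)}`, and summing pointwise to `S*_n`. -/
def GoodTuple (M : ℕ) (o : Fin (2 ^ (M + 1)) → ℝ) (R : ℕ → ℝ → ℝ) (n : ℕ)
    (Tup : Fin n → Ω → ℝ) : Prop :=
  iIndepFun Tup (volume : Measure Ω) ∧
  (∀ i : Fin n, ∀ ℓ < 2 ^ (n * (M + 1)), ∀ x y : Ω,
      (x : ℝ) ∈ D M n ℓ → (y : ℝ) ∈ D M n ℓ → Tup i x = Tup i y) ∧
  (∀ i : Fin n, ∀ s : Fin (2 ^ (M + 1)),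
      volume { ω : Ω | Tup i ω = o s } = ((2 : ℝ≥0∞) ^ (M + 1))⁻¹) ∧
  (∀ ω : Ω, ∑ i, Tup i ω = Sstar R n (ω : ℝ))

/-- `γ_{n,t}`: the sum of the multinomial coefficients `binom(n,k)` over the
multinomial vectors `k ∈ K_n` with `k·o = vt`. -/
def gammaCoef (M : ℕ) (o : Fin (2 ^ (M + 1)) → ℝ) (n : ℕ) (vt : ℝ) : ℕ :=
  ∑ k ∈ Finset.univ.filter (fun k : Fin (2 ^ (M + 1)) → Fin (n + 1) =>
      (∑ s, (k s : ℕ)) = n ∧ (∑ s, ((k s : ℕ) : ℝ) * o s) = vt),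
    Nat.multinomial Finset.univ (fun s => (k s : ℕ))

/-- `SMC(n,t) = Σ { binom(n,k) : k ∈ K_n, k·o < v_n^t }` for `t ≤ T_n`, with the
convention `SMC(n, T_n + 1) = 2^(n(M+1))`. -/
def SMC (M : ℕ) (o : Fin (2 ^ (M + 1)) → ℝ) (n T : ℕ) (v : ℕ → ℝ) (t : ℕ) : ℕ :=
  if t = T + 1 then 2 ^ (n * (M + 1))
  else ∑ k ∈ Finset.univ.filter (fun k : Fin (2 ^ (M + 1)) → Fin (n + 1) =>
      (∑ s, (k s : ℕ)) = n ∧ (∑ s, ((k s : ℕ) : ℝ) * o s) < v t),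
    Nat.multinomial Finset.univ (fun s => (k s : ℕ))

/-- The level set `{ ℓ < w : f ℓ = t }`; with `f = IStep` this is `IA_{n,t}`, with
`f = IWeight` this is `IB_{n,t}`. -/
def levelSet (w : ℕ) (f : ℕ → ℕ) (t : ℕ) : Finset ℕ :=
  (Finset.range w).filter fun ℓ => f ℓ = t

/-- The set `B_{n,t,ξ,ζ}` from the binary-search decomposition of `IB_{n,t} ∩ {0,…,ξ}`. -/
def Bzeta (w : ℕ) (IBt : Finset ℕ) (ξ ζ : ℕ) : Finset ℕ :=
  if bitOf w ξ ζ = 0 then ∅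
  else (IBt.filter fun ℓ =>
        bitOf w ℓ ζ = 0 ∧ ∀ j, 1 ≤ j → j < ζ → bitOf w ℓ j = bitOf w ξ j) ∪
    (if ξ ∈ IBt ∧ ∀ j, ζ < j → j ≤ w → bitOf w ξ j = 0 then {ξ} else ∅)
open Finset in
lemma sum_digits_lt (B : ℕ) (g : ℕ → ℕ) (hg : ∀ k, g k < B) (K : ℕ) :
    (∑ k ∈ Finset.range K, g k * B ^ k) < B ^ K := by
  induction K with
  | zero => simp
  | succ K ih =>
      rw [Finset.sum_range_succ, pow_succ]
      have h1 : g K * B ^ K ≤ (B - 1) * B ^ K :=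
        Nat.mul_le_mul_right _ (by have := hg K; omega)
      have hB : 1 ≤ B := (Nat.pos_of_ne_zero (by rintro rfl; exact absurd (hg 0) (by simp)))
      have h2 : B ^ K + (B-1) * B ^ K = B ^ K * B := by
        cases' Nat.exists_eq_add_of_le hB with c hc
        subst hc
        simp only [Nat.add_sub_cancel_left]
        ring
      omega

lemma sum_digits_div_mod (B : ℕ) (hB : 1 < B) (g : ℕ → ℕ) (hg : ∀ k, g k < B) (K j : ℕ) (hj : j < K) :
    (∑ k ∈ Finset.range K, g k * B ^ k) / B ^ j % B = g j := by
  have hsplit : (∑ k ∈ Finset.range K, g k * B ^ k)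
      = (∑ k ∈ Finset.range j, g k * B ^ k) + ∑ k ∈ Finset.Ico j K, g k * B ^ k := by
    rw [Finset.range_eq_Ico, ← Finset.sum_Ico_consecutive _ (Nat.zero_le j) hj.le,
      ← Finset.range_eq_Ico]
  have hB0 : 0 < B := by omega
  have hbot : (∑ k ∈ Finset.Ico j K, g k * B ^ k)
      = g j * B ^ j + ∑ k ∈ Finset.Ico (j+1) K, g k * B ^ k :=
    Finset.sum_eq_sum_Ico_succ_bot hj _
  have htail : (∑ k ∈ Finset.Ico (j+1) K, g k * B ^ k)
      = B ^ j * (B * ∑ k ∈ Finset.Ico (j+1) K, g k * B ^ (k - (j+1))) := by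
    rw [Finset.mul_sum, Finset.mul_sum]
    refine Finset.sum_congr rfl fun k hk => ?_
    rw [Finset.mem_Ico] at hk
    have : B ^ k = B ^ j * (B * B ^ (k - (j+1))) := by
      rw [← pow_succ', ← pow_add]
      congr 1
      omega
    rw [this]; ring
  have hA : (∑ k ∈ Finset.range j, g k * B ^ k) < B ^ j := sum_digits_lt B g hg j
  rw [hsplit, hbot, htail]
  have : (∑ k ∈ Finset.range j, g k * B ^ k) +
      (g j * B ^ j + B ^ j * (B * ∑ k ∈ Finset.Ico (j+1) K, g k * B ^ (k - (j+1))))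
      = (∑ k ∈ Finset.range j, g k * B ^ k) +
        B ^ j * (g j + B * ∑ k ∈ Finset.Ico (j+1) K, g k * B ^ (k - (j+1))) := by ring
  rw [this, Nat.add_mul_div_left _ _ (pow_pos hB0 j), Nat.div_eq_of_lt hA, zero_add,
    Nat.add_mul_mod_self_left, Nat.mod_eq_of_lt (hg j)]


lemma floor_nat_div_pow (N q : ℕ) : ⌊(N : ℝ) / 2 ^ q⌋ = (N / 2 ^ q : ℕ) := by
  have hq : (0:ℝ) < 2 ^ q := by positivity
  rw [Int.floor_eq_iff]
  constructor
  · rw [le_div_iff₀ hq]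
    push_cast
    exact_mod_cast (by exact_mod_cast Nat.cast_le.mpr (Nat.div_mul_le_self N (2^q)) :
      ((N / 2^q * 2^q : ℕ) : ℝ) ≤ (N:ℝ))
  · rw [div_lt_iff₀ hq]
    have : N < (N / 2 ^ q + 1) * 2 ^ q := by
      have h := Nat.div_add_mod N (2 ^ q)
      have h2 := Nat.mod_lt N (y := 2 ^ q) (pow_pos two_pos q)
      calc N = 2 ^ q * (N / 2 ^ q) + N % 2 ^ q := h.symm
        _ < 2 ^ q * (N / 2 ^ q) + 2 ^ q := by omega
        _ = (N / 2 ^ q + 1) * 2 ^ q := by ring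
    exact_mod_cast this

/-- Point in (0,1) with digits 1..K given by `d` and digit `K+1` equal to 1. -/
def ptN (K : ℕ) (d : ℕ → ℕ) : ℝ :=
  ((1 + ∑ p ∈ Finset.Icc 1 K, d p * 2 ^ (K + 1 - p) : ℕ) : ℝ) / 2 ^ (K + 1)

/-- Auxiliary digit function for `ptN`. -/
def gN (K : ℕ) (d : ℕ → ℕ) : ℕ → ℕ := fun k => if k = 0 then 1 else if k ≤ K then d (K + 1 - k) % 2 else 0

lemma gN_lt (K : ℕ) (d : ℕ → ℕ) : ∀ k, gN K d k < 2 := by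
  intro k; unfold gN; split <;> [omega; (split <;> omega)]

lemma natN_eq (K : ℕ) (d : ℕ → ℕ) (hd : ∀ p, d p ≤ 1) :
    (1 + ∑ p ∈ Finset.Icc 1 K, d p * 2 ^ (K + 1 - p)) =
    ∑ k ∈ Finset.range (K + 1), gN K d k * 2 ^ k := by
  have h0 : (∑ k ∈ Finset.range (K+1), gN K d k * 2 ^ k)
      = gN K d 0 * 2 ^ 0 + ∑ k ∈ Finset.Ico 1 (K+1), gN K d k * 2 ^ k := by
    rw [Finset.range_eq_Ico]
    exact Finset.sum_eq_sum_Ico_succ_bot (Nat.succ_pos K) _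
  rw [h0]
  simp only [gN, if_pos rfl, pow_zero, mul_one]
  congr 1
  rw [Finset.Ico_add_one_right_eq_Icc]
  refine Finset.sum_nbij' (fun p => K + 1 - p) (fun k => K + 1 - k) ?_ ?_ ?_ ?_ ?_ <;>
    intro a ha <;> simp only [Finset.mem_Icc] at *
  · omega
  · omega
  · omega
  · omega
  · have h1 : K + 1 - a ≠ 0 := by omega
    have h2 : K + 1 - a ≤ K := by omega
    have h3 : K + 1 - (K + 1 - a) = a := by omega
    simp [h1, h2, h3, Nat.mod_eq_of_lt (by have := hd a; omega : d a < 2)]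

lemma natN_lt (K : ℕ) (d : ℕ → ℕ) (hd : ∀ p, d p ≤ 1) :
    (1 + ∑ p ∈ Finset.Icc 1 K, d p * 2 ^ (K + 1 - p)) < 2 ^ (K + 1) := by
  rw [natN_eq K d hd]
  exact sum_digits_lt 2 _ (gN_lt K d) (K+1)

lemma ptN_mem (K : ℕ) (d : ℕ → ℕ) (hd : ∀ p, d p ≤ 1) : ptN K d ∈ Set.Ioo (0:ℝ) 1 := by
  unfold ptN
  constructor
  · positivity
  · rw [div_lt_one (by positivity)]
    exact_mod_cast natN_lt K d hd

lemma ptN_eps (K : ℕ) (d : ℕ → ℕ) (hd : ∀ p, d p ≤ 1) (p : ℕ) (h1 : 1 ≤ p) (h2 : p ≤ K) :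
    eps p (ptN K d) = d p := by
  have hsplit : (2:ℝ) ^ (K + 1) = 2 ^ (K + 1 - p) * 2 ^ p := by
    rw [← pow_add]; congr 1; omega
  have hmul : ptN K d * 2 ^ p
      = ((1 + ∑ q ∈ Finset.Icc 1 K, d q * 2 ^ (K + 1 - q) : ℕ) : ℝ) / 2 ^ (K + 1 - p) := by
    unfold ptN
    rw [hsplit]
    field_simp
  unfold eps
  rw [hmul, floor_nat_div_pow, Int.toNat_natCast, natN_eq K d hd,
    sum_digits_div_mod 2 one_lt_two _ (gN_lt K d) (K+1) (K+1-p) (by omega)]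
  have h1' : K + 1 - p ≠ 0 := by omega
  have h2' : K + 1 - p ≤ K := by omega
  have h3' : K + 1 - (K + 1 - p) = p := by omega
  simp [gN, h1', h2', h3', Nat.mod_eq_of_lt (by have := hd p; omega : d p < 2)]


lemma two_dvd_mul_pred (i : ℕ) : 2 ∣ i * (i - 1) * (M' + 1) := by
  rcases i with - | j
  · simp
  · refine Dvd.dvd.mul_right ?_ _
    simp only [Nat.add_sub_cancel]
    have : Even ((j+1) * j) := by rw [mul_comm]; exact Nat.even_mul_succ_self j
    exact this.two_dvd

lemma jidx_step (M j : ℕ) : jidx M (j+1) (M+1) + (j+2) = jidx M (j+2) 1 := by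
  unfold jidx
  obtain ⟨a, ha⟩ := two_dvd_mul_pred (M' := M) (j+1)
  obtain ⟨b, hb⟩ := two_dvd_mul_pred (M' := M) (j+2)
  rw [ha, hb, Nat.mul_div_cancel_left _ two_pos, Nat.mul_div_cancel_left _ two_pos]
  have e1 : j + 1 - 1 = j := by omega
  have e2 : j + 2 - 1 = j + 1 := by omega
  rw [e1] at ha
  rw [e2] at hb
  have hab : 2 * b = 2 * a + 2 * ((M+1) * (j+1)) := by
    rw [← ha, ← hb]
    ring
  have hb2 : b = a + (M+1) * (j+1) := by omega
  subst hb2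
  ring

lemma jidx_mono_r (M i : ℕ) {r r' : ℕ} (h : r ≤ r') : jidx M i r ≤ jidx M i r' :=
  Nat.add_le_add_left (Nat.mul_le_mul_right _ h) _

lemma jidx_mono_i (M r : ℕ) {i i' : ℕ} (h : i ≤ i') : jidx M i r ≤ jidx M i' r := by
  unfold jidx
  exact Nat.add_le_add (Nat.div_le_div_right (Nat.mul_le_mul_right _
    (Nat.mul_le_mul h (by omega)))) (Nat.mul_le_mul_left _ h)

lemma jidx_pos (M i r : ℕ) (hi : 1 ≤ i) (hr : 1 ≤ r) : 1 ≤ jidx M i r := by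
  unfold jidx
  have : 1 ≤ r * i := Nat.mul_le_mul hr hi
  omega

/-- strict monotonicity of `jidx` with respect to the position `(i-1)(M+1)+r`. -/
lemma jidx_lt_of_pos_lt (M : ℕ) {i r i' r' : ℕ} (hi : 1 ≤ i) (hr : 1 ≤ r) (hrM : r ≤ M + 1)
    (hi' : 1 ≤ i') (hr' : 1 ≤ r') (hrM' : r' ≤ M + 1)
    (h : (i - 1) * (M + 1) + r < (i' - 1) * (M + 1) + r') :
    jidx M i r < jidx M i' r' := by
  obtain ⟨a, rfl⟩ : ∃ a, i = a + 1 := ⟨i - 1, by omega⟩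
  obtain ⟨b, rfl⟩ : ∃ b, i' = b + 1 := ⟨i' - 1, by omega⟩
  simp only [Nat.add_sub_cancel] at h
  rcases lt_trichotomy a b with hab | rfl | hab
  · calc jidx M (a+1) r ≤ jidx M (a+1) (M+1) := jidx_mono_r M _ hrM
      _ < jidx M (a+2) 1 := by have := jidx_step M a; omega
      _ ≤ jidx M (b+1) 1 := jidx_mono_i M 1 (by omega)
      _ ≤ jidx M (b+1) r' := jidx_mono_r M _ hr'
  · have hrr : r < r' := by
      by_contra hc
      have : a * (M+1) + r' ≤ a * (M+1) + r := by omega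
      omega
    exact Nat.add_lt_add_left (Nat.mul_lt_mul_of_lt_of_le hrr (le_refl _) (by omega)) _
  · exfalso
    have h1 : b * (M+1) + r' ≤ (b+1) * (M+1) := by
      have : b * (M+1) + r' ≤ b * (M+1) + (M+1) := by omega
      calc b * (M+1) + r' ≤ b * (M+1) + (M+1) := this
        _ = (b+1)*(M+1) := by ring
    have h2 : (b+1) * (M+1) ≤ a * (M+1) := Nat.mul_le_mul_right _ (by omega)
    omega

lemma jidx_pos_eq (M : ℕ) {i r i' r' : ℕ} (hi : 1 ≤ i) (hr : 1 ≤ r) (hrM : r ≤ M + 1)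
    (hi' : 1 ≤ i') (hr' : 1 ≤ r') (hrM' : r' ≤ M + 1)
    (h : jidx M i r = jidx M i' r') :
    (i - 1) * (M + 1) + r = (i' - 1) * (M + 1) + r' := by
  rcases lt_trichotomy ((i - 1) * (M + 1) + r) ((i' - 1) * (M + 1) + r') with hc | hc | hc
  · exact absurd h (jidx_lt_of_pos_lt M hi hr hrM hi' hr' hrM' hc).ne
  · exact hc
  · exact absurd h.symm (jidx_lt_of_pos_lt M hi' hr' hrM' hi hr hrM hc).ne

lemma jidx_le_max (M n : ℕ) {i r : ℕ} (hin : i ≤ n) (hrM : r ≤ M + 1) :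
    jidx M i r ≤ jidx M n (M + 1) :=
  (jidx_mono_r M i hrM).trans (jidx_mono_i M (M+1) hin)

lemma bitOf_le_one (w ℓ q : ℕ) : bitOf w ℓ q ≤ 1 := by
  unfold bitOf; omega

/-- digit pattern for the canonical point of `E M n ℓ`. -/
def dE (M n ℓ : ℕ) : ℕ → ℕ := fun p =>
  if h : ∃ c : ℕ × ℕ, (1 ≤ c.1 ∧ c.1 ≤ n ∧ 1 ≤ c.2 ∧ c.2 ≤ M + 1 ∧ jidx M c.1 c.2 = p) then
    bitOf (n * (M + 1)) ℓ ((h.choose.1 - 1) * (M + 1) + h.choose.2)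
  else 0

lemma dE_le_one (M n ℓ : ℕ) : ∀ p, dE M n ℓ p ≤ 1 := by
  intro p; unfold dE; split
  · exact bitOf_le_one _ _ _
  · omega

/-- the canonical point of `E M n ℓ`. -/
def yE (M n ℓ : ℕ) : ℝ := ptN (jidx M n (M + 1)) (dE M n ℓ)

lemma yE_mem (M n ℓ : ℕ) : yE M n ℓ ∈ Set.Ioo (0:ℝ) 1 :=
  ptN_mem _ _ (dE_le_one M n ℓ)

lemma yE_eps (M n ℓ : ℕ) {i r : ℕ} (hi : 1 ≤ i) (hin : i ≤ n) (hr : 1 ≤ r) (hrM : r ≤ M + 1) :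
    eps (jidx M i r) (yE M n ℓ) = bitOf (n * (M + 1)) ℓ ((i - 1) * (M + 1) + r) := by
  unfold yE
  rw [ptN_eps _ _ (dE_le_one M n ℓ) _ (jidx_pos M i r hi hr) (jidx_le_max M n hin hrM)]
  unfold dE
  have hex : ∃ c : ℕ × ℕ, (1 ≤ c.1 ∧ c.1 ≤ n ∧ 1 ≤ c.2 ∧ c.2 ≤ M + 1 ∧
      jidx M c.1 c.2 = jidx M i r) := ⟨(i, r), hi, hin, hr, hrM, rfl⟩
  rw [dif_pos hex]
  obtain ⟨h1, h2, h3, h4, h5⟩ := hex.choose_spec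
  congr 1
  exact jidx_pos_eq M h1 h3 h4 hi hr hrM h5

lemma yE_mem_E (M n ℓ : ℕ) : yE M n ℓ ∈ E M n ℓ := by
  refine ⟨yE_mem M n ℓ, fun i hi r hr => ?_⟩
  rw [Finset.mem_Icc] at hi hr
  exact yE_eps M n ℓ hi.1 hi.2 hr.1 hr.2

/-- The value of the i-th block (i < n) of `ℓ < 2^(n(M+1))` in base `2^(M+1)`. -/
def blockVal (M n ℓ i : ℕ) : ℕ := ℓ / 2 ^ ((n - 1 - i) * (M + 1)) % 2 ^ (M + 1)

lemma blockVal_lt (M n ℓ i : ℕ) : blockVal M n ℓ i < 2 ^ (M + 1) :=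
  Nat.mod_lt _ (pow_pos two_pos _)

lemma blockVal_bit (M n ℓ i s : ℕ) (hs : s < M + 1) :
    blockVal M n ℓ i / 2 ^ s % 2 = ℓ / 2 ^ ((n - 1 - i) * (M + 1) + s) % 2 := by
  unfold blockVal
  have hpow : (2:ℕ) ^ (M + 1) = 2 ^ s * 2 ^ (M + 1 - s) := by
    rw [← pow_add]; congr 1; omega
  rw [hpow, Nat.mod_mul_right_div_self, Nat.mod_mod_of_dvd _ (dvd_pow_self 2 (by omega)),
    Nat.div_div_eq_div_mul, ← pow_add]

lemma bitOf_blockVal (M n ℓ : ℕ) {i r : ℕ} (hi : i < n) (hr : 1 ≤ r) (hrM : r ≤ M + 1) :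
    bitOf (M + 1) (blockVal M n ℓ i) r = bitOf (n * (M + 1)) ℓ (i * (M + 1) + r) := by
  have hE : (n - 1 - i) * (M + 1) + (M + 1 - r) = n * (M + 1) - (i * (M + 1) + r) := by
    obtain ⟨j, rfl⟩ : ∃ j, n = i + 1 + j := ⟨n - 1 - i, by omega⟩
    have h1 : i + 1 + j - 1 - i = j := by omega
    have h2 : (i + 1 + j) * (M + 1) = i * (M + 1) + (M + 1) + j * (M + 1) := by ring
    rw [h1, h2]
    omega
  unfold bitOf
  rw [blockVal_bit M n ℓ i _ (by omega), hE]

/-- canonical point of (0,1) whose first `M+1` digits are the bits of `b`. -/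
def ptO (M b : ℕ) : ℝ := ptN (M + 1) (fun r => bitOf (M + 1) b r)

lemma ptO_mem (M b : ℕ) : ptO M b ∈ Set.Ioo (0:ℝ) 1 :=
  ptN_mem _ _ (fun r => bitOf_le_one _ _ _)

lemma ptO_eps (M b : ℕ) {r : ℕ} (hr : 1 ≤ r) (hrM : r ≤ M + 1) :
    eps r (ptO M b) = bitOf (M + 1) b r :=
  ptN_eps _ _ (fun r => bitOf_le_one _ _ _) _ hr hrM

/-- the value of `O` on points whose first `M+1` digits are the bits of `b`. -/
def Oval (M : ℕ) (O : ℝ → ℝ) (b : ℕ) : ℝ := O (ptO M b)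

lemma R_yE {M : ℕ} {O : ℝ → ℝ} {o : Fin (2 ^ (M + 1)) → ℝ} {R : ℕ → ℝ → ℝ}
    (hS : Setup M O o R) {n : ℕ} (ℓ : ℕ) {i : ℕ} (hi : i < n) :
    R (i + 1) (yE M n ℓ) = Oval M O (blockVal M n ℓ i) := by
  refine hS.R_def (i+1) (by omega) _ (yE_mem M n ℓ) _ (ptO_mem _ _) fun r hr => ?_
  rw [Finset.mem_Icc] at hr
  rw [ptO_eps M _ hr.1 hr.2, bitOf_blockVal M n ℓ hi hr.1 hr.2,
    yE_eps M n ℓ (by omega) (by omega) hr.1 hr.2]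
  norm_num

lemma D_subset_Ioo {M n ℓ : ℕ} (hℓ : ℓ < 2 ^ (n * (M + 1))) : D M n ℓ ⊆ Set.Ioo (0:ℝ) 1 := by
  have hpow : (0:ℝ) < 2 ^ (n * (M + 1)) := by positivity
  unfold D
  split
  · intro x hx
    exact ⟨hx.1, hx.2.trans_le (by rw [inv_le_one_iff₀]; right; exact one_le_pow₀ one_le_two)⟩
  · intro x hx
    rename_i h0
    refine ⟨lt_of_lt_of_le ?_ hx.1, lt_of_lt_of_le hx.2 ?_⟩
    · positivity
    · rw [← div_eq_mul_inv, div_le_one hpow]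
      exact_mod_cast Nat.succ_le_of_lt hℓ

lemma mem_D_upper {M n ℓ : ℕ} {x : ℝ} (hx : x ∈ D M n ℓ) :
    x < ((ℓ:ℝ) + 1) * ((2:ℝ) ^ (n * (M + 1)))⁻¹ := by
  unfold D at hx
  split at hx
  · rename_i h; subst h; simpa using hx.2
  · exact hx.2

lemma mem_D_lower {M n ℓ : ℕ} {x : ℝ} (hx : x ∈ D M n ℓ) :
    (ℓ:ℝ) * ((2:ℝ) ^ (n * (M + 1)))⁻¹ ≤ x := by
  unfold D at hx
  split at hx
  · rename_i h; subst h; simpa using hx.1.le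
  · exact hx.1

lemma D_unique {M n ℓ ℓ' : ℕ} {x : ℝ} (hx : x ∈ D M n ℓ) (hx' : x ∈ D M n ℓ') : ℓ = ℓ' := by
  have hpow : (0:ℝ) < ((2:ℝ) ^ (n * (M + 1)))⁻¹ := by positivity
  by_contra hne
  rcases Nat.lt_or_ge ℓ ℓ' with h | h
  · have h1 := mem_D_upper hx
    have h2 := mem_D_lower hx'
    have : ((ℓ:ℝ) + 1) ≤ (ℓ':ℝ) := by exact_mod_cast Nat.succ_le_of_lt h
    nlinarith
  · have h : ℓ' < ℓ := by omega
    have h1 := mem_D_upper hx'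
    have h2 := mem_D_lower hx
    have : ((ℓ':ℝ) + 1) ≤ (ℓ:ℝ) := by exact_mod_cast Nat.succ_le_of_lt h
    nlinarith

lemma exists_mem_D {M n : ℕ} {x : ℝ} (hx : x ∈ Set.Ioo (0:ℝ) 1) :
    ∃ ℓ < 2 ^ (n * (M + 1)), x ∈ D M n ℓ := by
  set w := n * (M + 1)
  have hpow : (0:ℝ) < 2 ^ w := by positivity
  have hfl0 : 0 ≤ ⌊x * 2 ^ w⌋ := Int.floor_nonneg.mpr (mul_nonneg hx.1.le (by positivity))
  set ℓ : ℕ := (⌊x * 2 ^ w⌋).toNat with hℓdef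
  have hcast : (ℓ : ℝ) = (⌊x * 2 ^ w⌋ : ℝ) := by
    rw [hℓdef]; exact_mod_cast Int.toNat_of_nonneg hfl0
  have hub : x * 2 ^ w < 2 ^ w := by
    nlinarith [hx.2, hpow]
  have hℓlt : ℓ < 2 ^ w := by
    have h1 : ⌊x * 2 ^ w⌋ < (2:ℤ) ^ w := by
      apply Int.floor_lt.mpr
      push_cast
      exact hub
    have h2 : ((2:ℤ) ^ w) = ((2 ^ w : ℕ) : ℤ) := by push_cast; ring
    omega
  refine ⟨ℓ, hℓlt, ?_⟩
  have hle : (ℓ:ℝ) ≤ x * 2 ^ w := hcast.le.trans (Int.floor_le _)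
  have hlt : x * 2 ^ w < (ℓ:ℝ) + 1 := by
    rw [hcast]
    exact Int.lt_floor_add_one _
  unfold D
  split
  · rename_i h0
    refine ⟨hx.1, ?_⟩
    rw [h0] at hlt
    norm_num at hlt
    rw [inv_eq_one_div, lt_div_iff₀ hpow]
    exact hlt
  · constructor
    · rw [inv_eq_one_div, mul_one_div, div_le_iff₀ hpow]
      exact hle
    · rw [inv_eq_one_div, mul_one_div, lt_div_iff₀ hpow]
      exact hlt

lemma measurableSet_D (M n ℓ : ℕ) : MeasurableSet (D M n ℓ) := by
  unfold D
  split
  · exact measurableSet_Ioo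
  · exact measurableSet_Ico

lemma volume_D {M n ℓ : ℕ} : volume (D M n ℓ) = ((2:ℝ≥0∞) ^ (n * (M + 1)))⁻¹ := by
  have hinv : ENNReal.ofReal (((2:ℝ) ^ (n * (M + 1)))⁻¹) = ((2:ℝ≥0∞) ^ (n * (M + 1)))⁻¹ := by
    rw [ENNReal.ofReal_inv_of_pos (by positivity)]
    congr 1
    rw [ENNReal.ofReal_pow (by norm_num)]
    norm_num
  unfold D
  split
  · rw [Real.volume_Ioo]
    rw [← hinv]
    congr 1
    ring
  · rw [Real.volume_Ico]
    rw [← hinv]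
    congr 1
    ring

/-- Master measure computation: if membership in `A` is constant on each dyadic interval,
determined by a predicate `Q` on the index, then `μ01 A` is the number of good indices
times the common length. -/
lemma meas_filter (M n : ℕ) (A : Set ℝ) (F : Finset (Fin (2 ^ (n * (M + 1)))))
    (h : ∀ ℓ : Fin (2 ^ (n * (M + 1))), ∀ x ∈ D M n (ℓ : ℕ), (x ∈ A ↔ ℓ ∈ F)) :
    μ01 A = (F.card : ℝ≥0∞) * ((2:ℝ≥0∞) ^ (n * (M + 1)))⁻¹ := by
  have hset : A ∩ Set.Ioo (0:ℝ) 1 = ⋃ ℓ ∈ F, D M n (ℓ : ℕ) := by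
    ext x
    simp only [Set.mem_inter_iff, Set.mem_iUnion, exists_prop]
    constructor
    · rintro ⟨hA, hI⟩
      obtain ⟨ℓ, hℓ, hD⟩ := exists_mem_D (M := M) (n := n) hI
      exact ⟨⟨ℓ, hℓ⟩, (h ⟨ℓ, hℓ⟩ x hD).mp hA, hD⟩
    · rintro ⟨ℓ, hQ, hD⟩
      exact ⟨(h ℓ x hD).mpr hQ, D_subset_Ioo ℓ.isLt hD⟩
  have : μ01 A = volume (A ∩ Set.Ioo (0:ℝ) 1) := by
    unfold μ01
    rw [Measure.restrict_apply' measurableSet_Ioo]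
  have hdisj : Set.PairwiseDisjoint (↑F)
      (fun ℓ : Fin (2 ^ (n * (M + 1))) => D M n (ℓ : ℕ)) := by
    intro a _ b _ hab
    simp only [Function.onFun]
    rw [Set.disjoint_left]
    intro x hxa hxb
    exact hab (Fin.ext (D_unique hxa hxb))
  rw [this, hset, measure_biUnion_finset hdisj (fun ℓ _ => measurableSet_D M n (ℓ : ℕ))]
  trans (∑ _p ∈ F, ((2:ℝ≥0∞) ^ (n * (M + 1)))⁻¹)
  · exact Finset.sum_congr rfl fun ℓ _ => volume_D
  · rw [Finset.sum_const, nsmul_eq_mul]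

/-- the block decomposition map. -/
def blocks (M n : ℕ) (ℓ : Fin (2 ^ (n * (M + 1)))) : Fin n → Fin (2 ^ (M + 1)) :=
  fun i => ⟨blockVal M n ℓ i, blockVal_lt M n ℓ i⟩

/-- inverse of the block decomposition. -/
def unblocks (M n : ℕ) (f : Fin n → Fin (2 ^ (M + 1))) : ℕ :=
  ∑ i : Fin n, (f i : ℕ) * (2 ^ (M + 1)) ^ (n - 1 - (i : ℕ))

lemma pow_blocks_eq (M n : ℕ) : (2:ℕ) ^ (n * (M + 1)) = (2 ^ (M + 1)) ^ n := by
  rw [← pow_mul, mul_comm]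

lemma unblocks_eq_sum_range (M n : ℕ) (f : Fin n → Fin (2 ^ (M + 1))) :
    unblocks M n f = ∑ k ∈ Finset.range n,
      (fun k => if hk : k < n then ((f ⟨n - 1 - k, by omega⟩ : ℕ)) else 0) k * (2 ^ (M + 1)) ^ k := by
  unfold unblocks
  set G : ℕ → ℕ := fun k => if hk : k < n then ((f ⟨k, hk⟩ : ℕ)) * (2 ^ (M + 1)) ^ (n - 1 - k) else 0
    with hG
  have step1 : (∑ i : Fin n, (f i : ℕ) * (2 ^ (M + 1)) ^ (n - 1 - (i:ℕ))) = ∑ i : Fin n, G (i:ℕ) := by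
    refine Finset.sum_congr rfl fun i _ => ?_
    rw [hG]
    simp only [dif_pos i.isLt]
  rw [step1, Fin.sum_univ_eq_sum_range G n, ← Finset.sum_range_reflect]
  refine Finset.sum_congr rfl fun k hk => ?_
  rw [Finset.mem_range] at hk
  have h1 : n - 1 - k < n := by omega
  have h2 : n - 1 - (n - 1 - k) = k := by omega
  rw [hG]
  simp only [dif_pos h1, dif_pos hk, h2]

lemma unblocks_lt (M n : ℕ) (f : Fin n → Fin (2 ^ (M + 1))) :
    unblocks M n f < 2 ^ (n * (M + 1)) := by
  rw [pow_blocks_eq, unblocks_eq_sum_range]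
  apply sum_digits_lt
  intro k
  split
  · exact (f _).isLt
  · positivity

lemma blockVal_unblocks (M n : ℕ) (f : Fin n → Fin (2 ^ (M + 1))) (i : Fin n) :
    blockVal M n (unblocks M n f) (i : ℕ) = (f i : ℕ) := by
  unfold blockVal
  have hlt : n - 1 - (i : ℕ) < n := by have := i.isLt; omega
  have hp : (2:ℕ) ^ ((n - 1 - (i:ℕ)) * (M + 1)) = (2 ^ (M + 1)) ^ (n - 1 - (i:ℕ)) := by
    rw [← pow_mul, mul_comm]
  have hdigits : ∀ k, (fun k => if hk : k < n then
      ((f ⟨n - 1 - k, by omega⟩ : Fin (2^(M+1))) : ℕ) else 0) k < 2 ^ (M + 1) := by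
    intro k
    simp only []
    split
    · exact (f _).isLt
    · positivity
  rw [hp, unblocks_eq_sum_range,
    sum_digits_div_mod _ (Nat.one_lt_two_pow_iff.mpr (by omega)) _ hdigits n _ hlt]
  have harg : n - 1 - (n - 1 - (i:ℕ)) = (i:ℕ) := by have := i.isLt; omega
  simp only [dif_pos hlt, harg]

lemma eq_of_blocks {M n : ℕ} {ℓ ℓ' : ℕ} (hℓ : ℓ < 2 ^ (n * (M + 1)))
    (hℓ' : ℓ' < 2 ^ (n * (M + 1)))
    (h : ∀ i < n, blockVal M n ℓ i = blockVal M n ℓ' i) : ℓ = ℓ' := by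
  apply Nat.eq_of_testBit_eq
  intro k
  by_cases hk : k < n * (M + 1)
  · obtain ⟨q, s, hq, hsM, hqs⟩ : ∃ q s, q < n ∧ s < M + 1 ∧ q * (M + 1) + s = k := by
      refine ⟨k / (M + 1), k % (M + 1), ?_, Nat.mod_lt _ (by omega), ?_⟩
      · rw [Nat.div_lt_iff_lt_mul (by omega)]
        omega
      · rw [mul_comm]
        exact Nat.div_add_mod k (M + 1)
    have hi : n - 1 - (n - 1 - q) = q := by omega
    have hb := h (n - 1 - q) (by omega)
    have h1 : ℓ / 2 ^ k % 2 = ℓ' / 2 ^ k % 2 := by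
      rw [← hqs]
      have e1 := blockVal_bit M n ℓ (n - 1 - q) s hsM
      have e2 := blockVal_bit M n ℓ' (n - 1 - q) s hsM
      rw [hi] at e1 e2
      rw [← e1, ← e2, hb]
    simp only [Nat.testBit_eq_decide_div_mod_eq, h1]
  · rw [Nat.testBit_lt_two_pow (lt_of_lt_of_le hℓ (Nat.pow_le_pow_right (by omega) (by omega))),
      Nat.testBit_lt_two_pow (lt_of_lt_of_le hℓ' (Nat.pow_le_pow_right (by omega) (by omega)))]

lemma card_filter_blocks (M n : ℕ) (P : (Fin n → Fin (2 ^ (M + 1))) → Prop)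
    [DecidablePred P] [DecidablePred (fun ℓ : Fin (2 ^ (n * (M + 1))) => P (blocks M n ℓ))] :
    (Finset.univ.filter (fun ℓ : Fin (2 ^ (n * (M + 1))) => P (blocks M n ℓ))).card
      = (Finset.univ.filter P).card := by
  refine Finset.card_bij' (fun ℓ _ => blocks M n ℓ)
    (fun f _ => ⟨unblocks M n f, unblocks_lt M n f⟩) ?_ ?_ ?_ ?_
  · intro a ha
    simp only [Finset.mem_filter, Finset.mem_univ, true_and] at ha ⊢
    exact ha
  · intro f hf
    simp only [Finset.mem_filter, Finset.mem_univ, true_and] at hf ⊢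
    have : blocks M n ⟨unblocks M n f, unblocks_lt M n f⟩ = f := by
      funext i
      exact Fin.ext (blockVal_unblocks M n f i)
    rw [this]
    exact hf
  · intro a _
    apply Fin.ext
    apply eq_of_blocks (M := M) (n := n) (unblocks_lt M n (blocks M n a)) a.isLt
    intro i hi
    exact blockVal_unblocks M n (blocks M n a) ⟨i, hi⟩
  · intro f _
    funext i
    exact Fin.ext (blockVal_unblocks M n f i)

lemma eq_of_bitOf {W b b' : ℕ} (hb : b < 2 ^ W) (hb' : b' < 2 ^ W)
    (h : ∀ r, 1 ≤ r → r ≤ W → bitOf W b r = bitOf W b' r) : b = b' := by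
  apply Nat.eq_of_testBit_eq
  intro k
  by_cases hk : k < W
  · have hh := h (W - k) (by omega) (by omega)
    unfold bitOf at hh
    rw [show W - (W - k) = k by omega] at hh
    simp only [Nat.testBit_eq_decide_div_mod_eq, hh]
  · rw [Nat.testBit_lt_two_pow (lt_of_lt_of_le hb (Nat.pow_le_pow_right (by omega) (by omega))),
      Nat.testBit_lt_two_pow (lt_of_lt_of_le hb' (Nat.pow_le_pow_right (by omega) (by omega)))]

lemma Oval_inj {M : ℕ} {O : ℝ → ℝ} {o : Fin (2 ^ (M + 1)) → ℝ} {R : ℕ → ℝ → ℝ}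
    (hS : Setup M O o R) {b b' : ℕ} (hb : b < 2 ^ (M + 1)) (hb' : b' < 2 ^ (M + 1))
    (h : Oval M O b = Oval M O b') : b = b' := by
  refine eq_of_bitOf hb hb' fun r h1 h2 => ?_
  have hh := hS.O_inj _ (ptO_mem M b) _ (ptO_mem M b') h r (Finset.mem_Icc.mpr ⟨h1, h2⟩)
  rwa [ptO_eps M b h1 h2, ptO_eps M b' h1 h2] at hh

lemma exists_Oval {M : ℕ} {O : ℝ → ℝ} {o : Fin (2 ^ (M + 1)) → ℝ} {R : ℕ → ℝ → ℝ}
    (hS : Setup M O o R) (s : Fin (2 ^ (M + 1))) :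
    ∃ b : Fin (2 ^ (M + 1)), Oval M O (b : ℕ) = o s := by
  have hmem : o s ∈ O '' Set.Ioo (0:ℝ) 1 := hS.o_range ▸ ⟨s, rfl⟩
  obtain ⟨z, hz, hOz⟩ := hmem
  have heps : ∀ k, eps (M + 1 - k) z < 2 := fun k => by unfold eps; exact Nat.mod_lt _ two_pos
  set b := ∑ k ∈ Finset.range (M + 1), eps (M + 1 - k) z * 2 ^ k with hbdef
  have hblt : b < 2 ^ (M + 1) := sum_digits_lt 2 _ heps (M + 1)
  refine ⟨⟨b, hblt⟩, ?_⟩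
  rw [← hOz]
  refine hS.O_dep _ (ptO_mem M b) z hz fun r hr => ?_
  rw [Finset.mem_Icc] at hr
  rw [ptO_eps M b hr.1 hr.2]
  unfold bitOf
  rw [hbdef, sum_digits_div_mod 2 one_lt_two _ heps (M + 1) (M + 1 - r) (by omega),
    show M + 1 - (M + 1 - r) = r by omega]

lemma card_Oval_eq_one {M : ℕ} {O : ℝ → ℝ} {o : Fin (2 ^ (M + 1)) → ℝ} {R : ℕ → ℝ → ℝ}
    (hS : Setup M O o R) (s : Fin (2 ^ (M + 1))) :
    (Finset.univ.filter (fun b : Fin (2 ^ (M + 1)) => Oval M O (b : ℕ) = o s)).card = 1 := by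
  obtain ⟨b₀, hb₀⟩ := exists_Oval hS s
  rw [Finset.card_eq_one]
  refine ⟨b₀, ?_⟩
  ext b
  simp only [Finset.mem_filter, Finset.mem_univ, true_and, Finset.mem_singleton]
  constructor
  · intro hb
    exact Fin.ext (Oval_inj hS b.isLt b₀.isLt (hb.trans hb₀.symm))
  · rintro rfl
    exact hb₀

lemma card_pi_filter (M n : ℕ) (S : Finset (Fin n)) (Ti : Fin n → Finset (Fin (2 ^ (M + 1))))
    [DecidablePred (fun f : Fin n → Fin (2 ^ (M + 1)) => ∀ i ∈ S, f i ∈ Ti i)] :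
    (Finset.univ.filter (fun f : Fin n → Fin (2 ^ (M + 1)) => ∀ i ∈ S, f i ∈ Ti i)).card
      = (∏ i ∈ S, (Ti i).card) * (2 ^ (M + 1)) ^ (n - S.card) := by
  have hset : Finset.univ.filter (fun f : Fin n → Fin (2 ^ (M + 1)) => ∀ i ∈ S, f i ∈ Ti i)
      = Fintype.piFinset (fun i => if i ∈ S then Ti i else Finset.univ) := by
    ext f
    simp only [Finset.mem_filter, Finset.mem_univ, true_and, Fintype.mem_piFinset]
    constructor
    · intro h i
      split
      · exact h i ‹_›
      · exact Finset.mem_univ _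
    · intro h i hi
      have hh := h i
      rwa [if_pos hi] at hh
  rw [hset, Fintype.card_piFinset,
    ← Finset.prod_filter_mul_prod_filter_not Finset.univ (· ∈ S)]
  congr 1
  · rw [show Finset.univ.filter (· ∈ S) = S from by ext i; simp]
    exact Finset.prod_congr rfl fun i hi => by rw [if_pos hi]
  · have hconst : ∀ i ∈ Finset.univ.filter (fun i => ¬ i ∈ S),
        (if i ∈ S then Ti i else Finset.univ).card = 2 ^ (M + 1) := by
      intro i hi
      rw [Finset.mem_filter] at hi
      rw [if_neg hi.2, Finset.card_univ, Fintype.card_fin]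
    rw [Finset.prod_congr rfl hconst, Finset.prod_const,
      show (Finset.univ.filter (fun i => ¬ i ∈ S)) = Sᶜ from by ext i; simp,
      Finset.card_compl, Fintype.card_fin]

lemma two_pow_inv_helper (c d : ℕ) :
    (2:ℝ≥0∞) ^ c * ((2:ℝ≥0∞) ^ (c + d))⁻¹ = ((2:ℝ≥0∞) ^ d)⁻¹ := by
  rw [pow_add, ENNReal.mul_inv (Or.inl (pow_ne_zero _ two_ne_zero))
    (Or.inl (ENNReal.pow_ne_top ENNReal.ofNat_ne_top)), ← mul_assoc,
    ENNReal.mul_inv_cancel (pow_ne_zero _ two_ne_zero)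
      (ENNReal.pow_ne_top ENNReal.ofNat_ne_top), one_mul]

/-- given an admissible π, the functions R*_{n,i}(x) = R_i(y)
(x ∈ D_{n,ℓ}, y ∈ E_{n,π(ℓ)}) are n-trim, mutually independent, take each value o_s with
probability 2^{-(M+1)}, and sum pointwise to S*_n on (0,1). -/
theorem stmt_6 (M : ℕ) (O : ℝ → ℝ) (o : Fin (2 ^ (M + 1)) → ℝ) (R : ℕ → ℝ → ℝ)
    (hS : Setup M O o R) (n : ℕ) (hn : 1 ≤ n)
    (π : Equiv.Perm (Fin (2 ^ (n * (M + 1))))) (hπ : Admissible M R n π)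
    (Rstar : Fin n → ℝ → ℝ)
    (hdef : ∀ ℓ : Fin (2 ^ (n * (M + 1))), ∀ i : Fin n, ∀ x ∈ D M n (ℓ : ℕ),
      ∀ y ∈ E M n ((π ℓ : Fin _) : ℕ), Rstar i x = R ((i : ℕ) + 1) y) :
    (∀ i, Trim M n (Rstar i)) ∧
    iIndepFun Rstar μ01 ∧
    (∀ i : Fin n, ∀ s : Fin (2 ^ (M + 1)),
      μ01 { x | Rstar i x = o s } = ((2 : ℝ≥0∞) ^ (M + 1))⁻¹) ∧
    (∀ x ∈ Ioo (0:ℝ) 1, ∑ i, Rstar i x = Sstar R n x) := by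
  classical
  have hRstar : ∀ ℓ : Fin (2 ^ (n * (M + 1))), ∀ x ∈ D M n (ℓ : ℕ), ∀ i : Fin n,
      Rstar i x = Oval M O (blockVal M n ((π ℓ : Fin _) : ℕ) (i : ℕ)) := by
    intro ℓ x hx i
    rw [hdef ℓ i x hx (yE M n ((π ℓ : Fin _) : ℕ)) (yE_mem_E M n _)]
    exact R_yE hS _ i.isLt
  have key : ∀ (sets : Fin n → Set ℝ) (S : Finset (Fin n)),
      μ01 (⋂ i ∈ S, Rstar i ⁻¹' sets i)
        = (∏ i ∈ S, ((Finset.univ.filter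
            (fun b : Fin (2 ^ (M + 1)) => Oval M O (b : ℕ) ∈ sets i)).card : ℝ≥0∞))
          * (((2:ℝ≥0∞) ^ (M + 1))⁻¹) ^ S.card := by
    intro sets S
    set F : Finset (Fin (2 ^ (n * (M + 1)))) :=
      Finset.univ.filter
        (fun ℓ => ∀ i ∈ S, Oval M O (blockVal M n ((π ℓ : Fin _) : ℕ) (i : ℕ)) ∈ sets i)
      with hFdef
    have hQ : ∀ ℓ : Fin (2 ^ (n * (M + 1))), ∀ x ∈ D M n (ℓ : ℕ),
        (x ∈ ⋂ i ∈ S, Rstar i ⁻¹' sets i ↔ ℓ ∈ F) := by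
      intro ℓ x hx
      rw [hFdef]
      simp only [Set.mem_iInter, Set.mem_preimage, Finset.mem_filter, Finset.mem_univ, true_and]
      constructor
      · intro h i hi
        rw [← hRstar ℓ x hx i]
        exact h i hi
      · intro h i hi
        rw [hRstar ℓ x hx i]
        exact h i hi
    rw [meas_filter M n _ F hQ]
    have hcount : F.card
        = (∏ i ∈ S, (Finset.univ.filter
            (fun b : Fin (2 ^ (M + 1)) => Oval M O (b : ℕ) ∈ sets i)).card)
          * (2 ^ (M + 1)) ^ (n - S.card) := by
      rw [hFdef]
      trans (Finset.univ.filter (fun ℓ : Fin (2 ^ (n * (M + 1))) => ∀ i ∈ S,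
          Oval M O (blockVal M n (ℓ : ℕ) (i : ℕ)) ∈ sets i)).card
      · apply Finset.card_equiv π
        intro a
        simp only [Finset.mem_filter, Finset.mem_univ, true_and]
      trans (Finset.univ.filter (fun f : Fin n → Fin (2 ^ (M + 1)) => ∀ i ∈ S,
          Oval M O ((f i : ℕ)) ∈ sets i)).card
      · exact card_filter_blocks M n
          (fun f : Fin n → Fin (2 ^ (M + 1)) => ∀ i ∈ S, Oval M O ((f i : ℕ)) ∈ sets i)
      trans (Finset.univ.filter (fun f : Fin n → Fin (2 ^ (M + 1)) => ∀ i ∈ S,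
          f i ∈ Finset.univ.filter
            (fun b : Fin (2 ^ (M + 1)) => Oval M O (b : ℕ) ∈ sets i))).card
      · congr 1
        apply Finset.filter_congr
        intro f _
        simp only [Finset.mem_filter, Finset.mem_univ, true_and]
      exact card_pi_filter M n S _
    rw [hcount]
    have hcard : S.card ≤ n := by simpa using Finset.card_le_univ S
    have harith : ((2:ℝ≥0∞) ^ (M + 1)) ^ (n - S.card) * ((2:ℝ≥0∞) ^ (n * (M + 1)))⁻¹
        = (((2:ℝ≥0∞) ^ (M + 1))⁻¹) ^ S.card := by
      have h1 : (((2:ℝ≥0∞) ^ (M + 1))⁻¹) ^ S.card = ((2:ℝ≥0∞) ^ ((M + 1) * S.card))⁻¹ := by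
        rw [pow_mul]
        exact (ENNReal.inv_pow).symm
      rw [h1, ← pow_mul,
        show n * (M + 1) = (M + 1) * (n - S.card) + (M + 1) * S.card from by
          rw [← Nat.mul_add, Nat.sub_add_cancel hcard, Nat.mul_comm]]
      exact two_pow_inv_helper _ _
    push_cast
    rw [mul_assoc, harith]
  refine ⟨?_, ?_, ?_, ?_⟩
  · -- Trim
    intro i ℓ hℓ x hx y hy
    rw [hRstar ⟨ℓ, hℓ⟩ x hx i, hRstar ⟨ℓ, hℓ⟩ y hy i]
  · -- independence
    rw [iIndepFun_iff_measure_inter_preimage_eq_mul]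
    intro S sets _
    rw [key sets S]
    have hsingle : ∀ i : Fin n, μ01 (Rstar i ⁻¹' sets i)
        = ((Finset.univ.filter
            (fun b : Fin (2 ^ (M + 1)) => Oval M O (b : ℕ) ∈ sets i)).card : ℝ≥0∞)
          * ((2:ℝ≥0∞) ^ (M + 1))⁻¹ := by
      intro i
      have hh := key sets {i}
      simp only [Finset.mem_singleton, Set.iInter_iInter_eq_left, Finset.prod_singleton,
        Finset.card_singleton, pow_one] at hh
      exact hh
    rw [Finset.prod_congr rfl fun i _ => hsingle i, Finset.prod_mul_distrib,
      Finset.prod_const]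
  · -- distribution
    intro i s
    have hset : {x | Rstar i x = o s} = Rstar i ⁻¹' {o s} := rfl
    have hh := key (fun _ => {o s}) {i}
    simp only [Finset.mem_singleton, Set.iInter_iInter_eq_left, Finset.prod_singleton,
      Finset.card_singleton, pow_one] at hh
    rw [hset, hh]
    have : (Finset.univ.filter
        (fun b : Fin (2 ^ (M + 1)) => Oval M O (b : ℕ) ∈ ({o s} : Set ℝ))).card = 1 := by
      have heq : (Finset.univ.filter
          (fun b : Fin (2 ^ (M + 1)) => Oval M O (b : ℕ) ∈ ({o s} : Set ℝ)))
          = (Finset.univ.filter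
            (fun b : Fin (2 ^ (M + 1)) => Oval M O (b : ℕ) = o s)) := by
        ext b
        simp [Set.mem_singleton_iff]
      rw [heq]
      exact card_Oval_eq_one hS s
    convert (one_mul ((2:ℝ≥0∞) ^ (M + 1))⁻¹) using 2
    exact_mod_cast this
  · -- sum
    intro x hx
    obtain ⟨ℓ, hℓ, hD⟩ := exists_mem_D (M := M) (n := n) hx
    set y := yE M n ((π ⟨ℓ, hℓ⟩ : Fin _) : ℕ) with hy
    have hyE : y ∈ E M n ((π ⟨ℓ, hℓ⟩ : Fin _) : ℕ) := yE_mem_E M n _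
    have hsum : ∀ i : Fin n, Rstar i x = R ((i : ℕ) + 1) y :=
      fun i => hdef ⟨ℓ, hℓ⟩ i x hD y hyE
    rw [Finset.sum_congr rfl fun i _ => hsum i]
    have hS2 : (∑ i : Fin n, R ((i : ℕ) + 1) y) = S R n y := by
      rw [Fin.sum_univ_eq_sum_range (fun j => R (j + 1) y) n]
      unfold S
      refine Finset.sum_nbij' (fun j => j + 1) (fun j => j - 1) ?_ ?_ ?_ ?_ ?_ <;>
        intro a ha <;>
        simp only [Finset.mem_range, Finset.mem_Icc] at * <;>
        try omega
    rw [hS2]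
    exact (hπ ⟨ℓ, hℓ⟩ x hD y hyE).symm
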